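/- For any λ ∈ ℂ, the 6-dimensional complex Novikov algebras N⁶₃₄(λ) and N⁶₃₄(-λ) are isomorphic, where N⁶₃₄(λ) has basis e₁,...,e₆ and nonzero products e₁e₁ = e₂, e₁e₂ = e₃, e₁e₃ = e₄, e₁e₄ = e₅, e₁e₅ = 2e₆, e₂e₁ = e₅ + λe₆, e₂e₂ = e₆, e₃e₁ = e₆. -/
import Mathlib


/-- The 6-dimensional Novikov algebra `N⁶₃₄(λ)` over ℂ, with basis `e₁,…,e₆`
and nonzero products `e₁e₁ = e₂`, `e₁e₂ = e₃`, `e₁e₃ = e₄`, `e₁e₄ = e₅`,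
`e₁e₅ = 2e₆`, `e₂e₁ = e₅ + λe₆`, `e₂e₂ = e₆`, `e₃e₁ = e₆`. -/
noncomputable def mulN634 (l : ℂ) (a b : Fin 6 → ℂ) : Fin 6 → ℂ :=
  ![0, a 0 * b 0, a 0 * b 1, a 0 * b 2,
    a 0 * b 3 + a 1 * b 0,
    2 * (a 0 * b 4) + l * (a 1 * b 0) + a 1 * b 1 + a 2 * b 0]

@[simp] lemma cons_val_five' {α : Type*} (x₀ x₁ x₂ x₃ x₄ x₅ : α) :
    ![x₀, x₁, x₂, x₃, x₄, x₅] (5 : Fin 6) = x₅ := rfl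

noncomputable def signFlip : (Fin 6 → ℂ) ≃ₗ[ℂ] (Fin 6 → ℂ) where
  toFun a := ![-(a 0), a 1, -(a 2), a 3, -(a 4), a 5]
  invFun a := ![-(a 0), a 1, -(a 2), a 3, -(a 4), a 5]
  map_add' a b := by funext i; fin_cases i <;> simp [cons_val_five'] <;> ring
  map_smul' c a := by funext i; fin_cases i <;> simp [cons_val_five'] <;> ring
  left_inv a := by funext i; fin_cases i <;> simp [cons_val_five']
  right_inv a := by funext i; fin_cases i <;> simp [cons_val_five']

/-- For any `λ ∈ ℂ`, the algebras `N⁶₃₄(λ)` and `N⁶₃₄(-λ)` are isomorphic. -/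
theorem N634_iso_neg (l : ℂ) :
    ∃ φ : (Fin 6 → ℂ) ≃ₗ[ℂ] (Fin 6 → ℂ),
      ∀ a b : Fin 6 → ℂ, φ (mulN634 l a b) = mulN634 (-l) (φ a) (φ b) := by
  refine ⟨signFlip, fun a b => ?_⟩
  funext i
  fin_cases i <;> simp [signFlip, mulN634, cons_val_five'] <;> ring
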